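/- For every β ≥ 1 the error exponent is constant in β and equals its zero-temperature value: E(R,β) = E(R,∞) for all β ≥ 1, where E(R,∞) = min_{Q_{XY}} { D(Q_{XY}‖P) + min{ [R−H_Q(X'|Y)]_+ : ε(Q_{X'Y}) ≥ ε(Q_{XY}) } }. -/
import Mathlib


open Real Finset Filter

/-- `Q : X → Y → ℝ` is a joint pmf on `X × Y`. -/
def IsJointPMF {X Y : Type*} [Fintype X] [Fintype Y] (Q : X → Y → ℝ) : Prop :=
  (∀ x y, 0 ≤ Q x y) ∧ ∑ x, ∑ y, Q x y = 1

/-- `Q : Y → X → ℝ` is a conditional pmf from `Y` to `X`. -/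
def IsCondPMF {X Y : Type*} [Fintype X] (Q : Y → X → ℝ) : Prop :=
  (∀ y x, 0 ≤ Q y x) ∧ ∀ y, ∑ x, Q y x = 1

/-- `ε(Q_{XY}) = Σ_{x,y} Q_{XY}(x,y) ln P(x,y)`. -/
noncomputable def epsJ {X Y : Type*} [Fintype X] [Fintype Y] (P Q : X → Y → ℝ) : ℝ :=
  ∑ x, ∑ y, Q x y * Real.log (P x y)

/-- `D(Q‖P) = Σ_{x,y} Q(x,y) ln (Q(x,y)/P(x,y))`. -/
noncomputable def KLdiv {X Y : Type*} [Fintype X] [Fintype Y] (Q P : X → Y → ℝ) : ℝ :=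
  ∑ x, ∑ y, Q x y * Real.log (Q x y / P x y)

/-- The `Y`-marginal `Q_Y(y) = Σ_x Q(x,y)` of a joint pmf `Q`. -/
noncomputable def margY {X Y : Type*} [Fintype X] (Q : X → Y → ℝ) (y : Y) : ℝ := ∑ x, Q x y

/-- `ε(Q_{X'Y}) = Σ_{x,y} Q_Y(y) Q_{X'|Y}(x|y) ln P(x,y)` for a conditional pmf `Qc`
combined with a marginal `Qy`. -/
noncomputable def epsC {X Y : Type*} [Fintype X] [Fintype Y] (P : X → Y → ℝ)
    (Qy : Y → ℝ) (Qc : Y → X → ℝ) : ℝ :=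
  ∑ y, ∑ x, Qy y * Qc y x * Real.log (P x y)

/-- `H_Q(X'|Y) = −Σ_{x,y} Q_Y(y) Q_{X'|Y}(x|y) ln Q_{X'|Y}(x|y)`. -/
noncomputable def entC {X Y : Type*} [Fintype X] [Fintype Y]
    (Qy : Y → ℝ) (Qc : Y → X → ℝ) : ℝ :=
  -∑ y, ∑ x, Qy y * Qc y x * Real.log (Qc y x)

/-- `A(Q_{XY},R,β) = min{[R − H_Q(X'|Y)]_+ :
ε(Q_{X'Y}) + (1/β)[H_Q(X'|Y) − R]_+ ≥ ε(Q_{XY})}`.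
(The constraint set is never empty, since the conditional of `Q_{XY}` itself is feasible.) -/
noncomputable def Afun {X Y : Type*} [Fintype X] [Fintype Y] (P Q : X → Y → ℝ)
    (R β : ℝ) : ℝ :=
  sInf {a : ℝ | ∃ Qc : Y → X → ℝ, IsCondPMF Qc ∧
    epsJ P Q ≤ epsC P (margY Q) Qc + (1 / β) * max (entC (margY Q) Qc - R) 0 ∧
    a = max (R - entC (margY Q) Qc) 0}

/-- The error exponent `E(R,β) = min_{Q_{XY}} [D(Q_{XY}‖P) + A(Q_{XY},R,β)]`. -/
noncomputable def Efun {X Y : Type*} [Fintype X] [Fintype Y] (P : X → Y → ℝ)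
    (R β : ℝ) : ℝ :=
  sInf {e : ℝ | ∃ Q : X → Y → ℝ, IsJointPMF Q ∧ e = KLdiv Q P + Afun P Q R β}

/-- The zero-temperature version `A(Q_{XY},R,∞) = min{[R − H_Q(X'|Y)]_+ :
ε(Q_{X'Y}) ≥ ε(Q_{XY})}`. -/
noncomputable def AfunInf {X Y : Type*} [Fintype X] [Fintype Y] (P Q : X → Y → ℝ)
    (R : ℝ) : ℝ :=
  sInf {a : ℝ | ∃ Qc : Y → X → ℝ, IsCondPMF Qc ∧
    epsJ P Q ≤ epsC P (margY Q) Qc ∧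
    a = max (R - entC (margY Q) Qc) 0}

/-- `E(R,∞) = min_{Q_{XY}} [D(Q_{XY}‖P) + A(Q_{XY},R,∞)]`. -/
noncomputable def EfunInf {X Y : Type*} [Fintype X] [Fintype Y] (P : X → Y → ℝ)
    (R : ℝ) : ℝ :=
  sInf {e : ℝ | ∃ Q : X → Y → ℝ, IsJointPMF Q ∧ e = KLdiv Q P + AfunInf P Q R}

section helpers

variable {X Y : Type*} [Fintype X] [Fintype Y]
set_option linter.unusedSectionVars false

lemma margY_nonneg (Q : X → Y → ℝ) (h : ∀ x y, 0 ≤ Q x y) (y : Y) : 0 ≤ margY Q y :=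
  Finset.sum_nonneg fun x _ => h x y

lemma le_margY (Q : X → Y → ℝ) (h : ∀ x y, 0 ≤ Q x y) (x : X) (y : Y) : Q x y ≤ margY Q y :=
  Finset.single_le_sum (f := fun x => Q x y) (fun x _ => h x y) (Finset.mem_univ x)

lemma Q_eq_zero_of_margY (Q : X → Y → ℝ) (h : ∀ x y, 0 ≤ Q x y) (x : X) (y : Y)
    (hm : margY Q y = 0) : Q x y = 0 :=
  le_antisymm (hm ▸ le_margY Q h x y) (h x y)

noncomputable def condOf (Q : X → Y → ℝ) : Y → X → ℝ :=
  fun y x => if margY Q y = 0 then (Fintype.card X : ℝ)⁻¹ else Q x y / margY Q y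

lemma condOf_isCond [Nonempty X] (Q : X → Y → ℝ) (h : ∀ x y, 0 ≤ Q x y) :
    IsCondPMF (condOf Q) := by
  constructor
  · intro y x
    unfold condOf
    split
    · positivity
    · exact div_nonneg (h x y) (margY_nonneg Q h y)
  · intro y
    by_cases hm : margY Q y = 0
    · have hc : ∀ x, condOf Q y x = (Fintype.card X : ℝ)⁻¹ := fun x => if_pos hm
      rw [Finset.sum_congr rfl fun x _ => hc x, Finset.sum_const, Finset.card_univ,
        nsmul_eq_mul, mul_inv_cancel₀]
      exact_mod_cast Fintype.card_ne_zero
    · have hc : ∀ x, condOf Q y x = Q x y / margY Q y := fun x => if_neg hm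
      rw [Finset.sum_congr rfl fun x _ => hc x, ← Finset.sum_div, div_eq_one_iff_eq hm]
      rfl

lemma mul_condOf (Q : X → Y → ℝ) (h : ∀ x y, 0 ≤ Q x y) (y : Y) (x : X) :
    margY Q y * condOf Q y x = Q x y := by
  unfold condOf
  by_cases hm : margY Q y = 0
  · simp [hm, Q_eq_zero_of_margY Q h x y hm]
  · simp only [if_neg hm]
    field_simp

lemma epsC_condOf (P Q : X → Y → ℝ) (h : ∀ x y, 0 ≤ Q x y) :
    epsC P (margY Q) (condOf Q) = epsJ P Q := by
  unfold epsC epsJ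
  rw [Finset.sum_comm]
  exact Finset.sum_congr rfl fun x _ => Finset.sum_congr rfl fun y _ => by
    rw [mul_condOf Q h]

lemma klNonneg (P Q : X → Y → ℝ) (hpos : ∀ x y, 0 < P x y) (hsum : ∑ x, ∑ y, P x y = 1)
    (hQ : IsJointPMF Q) : 0 ≤ KLdiv Q P := by
  have h1 : ∀ x y, Q x y - P x y ≤ Q x y * Real.log (Q x y / P x y) := by
    intro x y
    rcases eq_or_lt_of_le (hQ.1 x y) with h0 | h0
    · rw [← h0]
      simp
      linarith [(hpos x y).le]
    · have hp := hpos x y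
      have hle : Real.log (P x y / Q x y) ≤ P x y / Q x y - 1 :=
        Real.log_le_sub_one_of_pos (by positivity)
      have hlog : Real.log (Q x y / P x y) = - Real.log (P x y / Q x y) := by
        rw [← Real.log_inv, inv_div]
      have h2 : 1 - P x y / Q x y ≤ Real.log (Q x y / P x y) := by
        rw [hlog]; linarith
      have h3 := mul_le_mul_of_nonneg_left h2 h0.le
      have h4 : Q x y * (1 - P x y / Q x y) = Q x y - P x y := by
        field_simp
      linarith
  have : (∑ x, ∑ y, Q x y) - (∑ x, ∑ y, P x y) ≤ KLdiv Q P := by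
    unfold KLdiv
    rw [← Finset.sum_sub_distrib]
    apply Finset.sum_le_sum
    intro x _
    rw [← Finset.sum_sub_distrib]
    exact Finset.sum_le_sum fun y _ => h1 x y
  rw [hQ.2, hsum] at this
  linarith

/-- KL of a joint pmf split via its conditional. -/
lemma kl_eq (P Q : X → Y → ℝ) (hpos : ∀ x y, 0 < P x y) (hQ : IsJointPMF Q) :
    KLdiv Q P = (∑ y, margY Q y * Real.log (margY Q y))
      - entC (margY Q) (condOf Q) - epsJ P Q := by
  have hterm : ∀ y x, Q x y * Real.log (Q x y / P x y)
      = margY Q y * condOf Q y x * Real.log (condOf Q y x)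
        + Q x y * Real.log (margY Q y) - Q x y * Real.log (P x y) := by
    intro y x
    rw [mul_condOf Q hQ.1]
    rcases eq_or_lt_of_le (hQ.1 x y) with h0 | h0
    · simp [← h0]
    · have hm : 0 < margY Q y := lt_of_lt_of_le h0 (le_margY Q hQ.1 x y)
      have hc : condOf Q y x = Q x y / margY Q y := by
        unfold condOf; rw [if_neg hm.ne']
      rw [hc, Real.log_div h0.ne' (hpos x y).ne', Real.log_div h0.ne' hm.ne']
      ring
  unfold KLdiv
  rw [Finset.sum_comm]
  rw [Finset.sum_congr rfl fun y _ => Finset.sum_congr rfl fun x _ => hterm y x]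
  simp only [Finset.sum_sub_distrib, Finset.sum_add_distrib]
  unfold entC epsJ
  rw [Finset.sum_comm (s := Finset.univ) (t := Finset.univ)
    (f := fun y x => Q x y * Real.log (P x y))]
  have hmid : ∀ y, ∑ x, Q x y * Real.log (margY Q y) = margY Q y * Real.log (margY Q y) := by
    intro y
    rw [← Finset.sum_mul]
    rfl
  rw [Finset.sum_congr rfl fun y _ => hmid y]
  ring

/-- KL of the product `margY Q ⊗ Qc`. -/
lemma kl_prod (P Q : X → Y → ℝ) (hpos : ∀ x y, 0 < P x y) (hQ : IsJointPMF Q)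
    (Qc : Y → X → ℝ) (hQc : IsCondPMF Qc) :
    KLdiv (fun x y => margY Q y * Qc y x) P
      = (∑ y, margY Q y * Real.log (margY Q y))
        - entC (margY Q) Qc - epsC P (margY Q) Qc := by
  have hterm : ∀ y x, margY Q y * Qc y x * Real.log (margY Q y * Qc y x / P x y)
      = margY Q y * Qc y x * Real.log (margY Q y)
        + margY Q y * Qc y x * Real.log (Qc y x)
        - margY Q y * Qc y x * Real.log (P x y) := by
    intro y x
    rcases eq_or_lt_of_le (margY_nonneg Q hQ.1 y) with hm | hm
    · simp [← hm]
    · rcases eq_or_lt_of_le (hQc.1 y x) with hc | hc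
      · simp [← hc]
      · rw [Real.log_div (by positivity) (hpos x y).ne', Real.log_mul hm.ne' hc.ne']
        ring
  unfold KLdiv
  rw [Finset.sum_comm]
  rw [Finset.sum_congr rfl fun y _ => Finset.sum_congr rfl fun x _ => hterm y x]
  simp only [Finset.sum_sub_distrib, Finset.sum_add_distrib]
  unfold entC epsC
  have hfst : ∀ y, ∑ x, margY Q y * Qc y x * Real.log (margY Q y)
      = margY Q y * Real.log (margY Q y) := by
    intro y
    calc ∑ x, margY Q y * Qc y x * Real.log (margY Q y)
        = ∑ x, (margY Q y * Real.log (margY Q y)) * Qc y x :=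
          Finset.sum_congr rfl fun x _ => by ring
      _ = (margY Q y * Real.log (margY Q y)) * ∑ x, Qc y x := by rw [Finset.mul_sum]
      _ = margY Q y * Real.log (margY Q y) := by rw [hQc.2 y, mul_one]
  rw [Finset.sum_congr rfl fun y _ => hfst y]
  ring

lemma margY_prod (Q : X → Y → ℝ) (Qc : Y → X → ℝ) (hQc : IsCondPMF Qc) :
    margY (fun x y => margY Q y * Qc y x) = margY Q := by
  funext y
  show ∑ x, margY Q y * Qc y x = margY Q y
  rw [← Finset.mul_sum, hQc.2 y, mul_one]

lemma epsJ_prod (P Q : X → Y → ℝ) (Qc : Y → X → ℝ) :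
    epsJ P (fun x y => margY Q y * Qc y x) = epsC P (margY Q) Qc := by
  unfold epsJ epsC
  rw [Finset.sum_comm]

lemma isJoint_prod (Q : X → Y → ℝ) (hQ : IsJointPMF Q) (Qc : Y → X → ℝ)
    (hQc : IsCondPMF Qc) : IsJointPMF (fun x y => margY Q y * Qc y x) := by
  constructor
  · intro x y
    exact mul_nonneg (margY_nonneg Q hQ.1 y) (hQc.1 y x)
  · rw [Finset.sum_comm]
    have : ∀ y, ∑ x, margY Q y * Qc y x = margY Q y := by
      intro y; rw [← Finset.mul_sum, hQc.2 y, mul_one]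
    rw [Finset.sum_congr rfl fun y _ => this y]
    unfold margY
    rw [Finset.sum_comm]
    exact hQ.2

end helpers

section main

variable {X Y : Type*} [Fintype X] [Fintype Y]
set_option linter.unusedSectionVars false

lemma afun_bdd (P Q : X → Y → ℝ) (R β : ℝ) :
    BddBelow {a : ℝ | ∃ Qc : Y → X → ℝ, IsCondPMF Qc ∧
      epsJ P Q ≤ epsC P (margY Q) Qc + (1 / β) * max (entC (margY Q) Qc - R) 0 ∧
      a = max (R - entC (margY Q) Qc) 0} :=
  ⟨0, by rintro a ⟨Qc, _, _, rfl⟩; exact le_max_right _ _⟩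

lemma afunInf_bdd (P Q : X → Y → ℝ) (R : ℝ) :
    BddBelow {a : ℝ | ∃ Qc : Y → X → ℝ, IsCondPMF Qc ∧
      epsJ P Q ≤ epsC P (margY Q) Qc ∧
      a = max (R - entC (margY Q) Qc) 0} :=
  ⟨0, by rintro a ⟨Qc, _, _, rfl⟩; exact le_max_right _ _⟩

lemma afun_nonneg (P Q : X → Y → ℝ) (R β : ℝ) : 0 ≤ Afun P Q R β :=
  Real.sInf_nonneg (by rintro a ⟨Qc, _, _, rfl⟩; exact le_max_right _ _)

lemma afunInf_nonneg (P Q : X → Y → ℝ) (R : ℝ) : 0 ≤ AfunInf P Q R :=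
  Real.sInf_nonneg (by rintro a ⟨Qc, _, _, rfl⟩; exact le_max_right _ _)

lemma afun_le (P Q : X → Y → ℝ) (R β : ℝ) (Qc : Y → X → ℝ) (hQc : IsCondPMF Qc)
    (hfe : epsJ P Q ≤ epsC P (margY Q) Qc + (1 / β) * max (entC (margY Q) Qc - R) 0) :
    Afun P Q R β ≤ max (R - entC (margY Q) Qc) 0 := by
  unfold Afun
  exact csInf_le (afun_bdd P Q R β) ⟨Qc, hQc, hfe, rfl⟩

lemma afunInf_le (P Q : X → Y → ℝ) (R : ℝ) (Qc : Y → X → ℝ) (hQc : IsCondPMF Qc)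
    (hfe : epsJ P Q ≤ epsC P (margY Q) Qc) :
    AfunInf P Q R ≤ max (R - entC (margY Q) Qc) 0 := by
  unfold AfunInf
  exact csInf_le (afunInf_bdd P Q R) ⟨Qc, hQc, hfe, rfl⟩

lemma afun_set_nonempty [Nonempty X] (P Q : X → Y → ℝ) (hQ : IsJointPMF Q)
    (R β : ℝ) (hβ : 0 < β) :
    Set.Nonempty {a : ℝ | ∃ Qc : Y → X → ℝ, IsCondPMF Qc ∧
      epsJ P Q ≤ epsC P (margY Q) Qc + (1 / β) * max (entC (margY Q) Qc - R) 0 ∧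
      a = max (R - entC (margY Q) Qc) 0} := by
  refine ⟨_, condOf Q, condOf_isCond Q hQ.1, ?_, rfl⟩
  rw [epsC_condOf P Q hQ.1]
  have : 0 ≤ (1 / β) * max (entC (margY Q) (condOf Q) - R) 0 :=
    mul_nonneg (by positivity) (le_max_right _ _)
  linarith

lemma afunInf_set_nonempty [Nonempty X] (P Q : X → Y → ℝ) (hQ : IsJointPMF Q) (R : ℝ) :
    Set.Nonempty {a : ℝ | ∃ Qc : Y → X → ℝ, IsCondPMF Qc ∧
      epsJ P Q ≤ epsC P (margY Q) Qc ∧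
      a = max (R - entC (margY Q) Qc) 0} :=
  ⟨_, condOf Q, condOf_isCond Q hQ.1, le_of_eq (epsC_condOf P Q hQ.1).symm, rfl⟩

lemma efun_bdd (P : X → Y → ℝ) (hpos : ∀ x y, 0 < P x y) (hsum : ∑ x, ∑ y, P x y = 1)
    (R β : ℝ) :
    BddBelow {e : ℝ | ∃ Q : X → Y → ℝ, IsJointPMF Q ∧ e = KLdiv Q P + Afun P Q R β} := by
  refine ⟨0, ?_⟩
  rintro e ⟨Q, hQ, rfl⟩
  have h1 := klNonneg P Q hpos hsum hQ
  have h2 := afun_nonneg P Q R β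
  linarith

lemma efunInf_bdd (P : X → Y → ℝ) (hpos : ∀ x y, 0 < P x y) (hsum : ∑ x, ∑ y, P x y = 1)
    (R : ℝ) :
    BddBelow {e : ℝ | ∃ Q : X → Y → ℝ, IsJointPMF Q ∧ e = KLdiv Q P + AfunInf P Q R} := by
  refine ⟨0, ?_⟩
  rintro e ⟨Q, hQ, rfl⟩
  have h1 := klNonneg P Q hpos hsum hQ
  have h2 := afunInf_nonneg P Q R
  linarith

lemma efun_le (P : X → Y → ℝ) (hpos : ∀ x y, 0 < P x y) (hsum : ∑ x, ∑ y, P x y = 1)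
    (R β : ℝ) (Q : X → Y → ℝ) (hQ : IsJointPMF Q) :
    Efun P R β ≤ KLdiv Q P + Afun P Q R β := by
  unfold Efun
  exact csInf_le (efun_bdd P hpos hsum R β) ⟨Q, hQ, rfl⟩

lemma efunInf_le (P : X → Y → ℝ) (hpos : ∀ x y, 0 < P x y) (hsum : ∑ x, ∑ y, P x y = 1)
    (R : ℝ) (Q : X → Y → ℝ) (hQ : IsJointPMF Q) :
    EfunInf P R ≤ KLdiv Q P + AfunInf P Q R := by
  unfold EfunInf
  exact csInf_le (efunInf_bdd P hpos hsum R) ⟨Q, hQ, rfl⟩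

end main

/-- for every `β ≥ 1` the error exponent is constant in `β` and equals its
zero-temperature value: `E(R,β) = E(R,∞)`. -/
theorem stmt15 {X Y : Type*} [Fintype X] [Fintype Y]
    (P : X → Y → ℝ) (hpos : ∀ x y, 0 < P x y) (hsum : ∑ x, ∑ y, P x y = 1)
    (R β : ℝ) (hβ : 1 ≤ β) :
    Efun P R β = EfunInf P R := by
  have hβ0 : 0 < β := lt_of_lt_of_le one_pos hβ
  have hX : Nonempty X := by
    by_contra h
    rw [not_nonempty_iff] at h
    rw [Finset.univ_eq_empty, Finset.sum_empty] at hsum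
    exact one_ne_zero hsum.symm
  have hY : Nonempty Y := by
    by_contra h
    rw [not_nonempty_iff] at h
    simp only [Finset.univ_eq_empty (α := Y), Finset.sum_empty, Finset.sum_const,
      smul_zero] at hsum
    exact one_ne_zero hsum.symm
  have hPpmf : IsJointPMF P := ⟨fun x y => (hpos x y).le, hsum⟩
  apply le_antisymm
  · -- Efun ≤ EfunInf
    rw [EfunInf]
    apply le_csInf
    · exact ⟨_, P, hPpmf, rfl⟩
    rintro e ⟨Q, hQ, rfl⟩
    have h1 : Afun P Q R β ≤ AfunInf P Q R := by
      rw [AfunInf]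
      apply le_csInf (afunInf_set_nonempty P Q hQ R)
      rintro a ⟨Qc, hQc, hfeas, rfl⟩
      apply afun_le P Q R β Qc hQc
      have : 0 ≤ (1 / β) * max (entC (margY Q) Qc - R) 0 :=
        mul_nonneg (by positivity) (le_max_right _ _)
      linarith
    have h2 := efun_le P hpos hsum R β Q hQ
    linarith
  · -- EfunInf ≤ Efun
    rw [Efun]
    apply le_csInf
    · exact ⟨_, P, hPpmf, rfl⟩
    rintro e ⟨Q, hQ, rfl⟩
    apply le_of_forall_pos_le_add
    intro δ hδ
    obtain ⟨a, ha, hlt⟩ := Real.lt_sInf_add_pos (afun_set_nonempty P Q hQ R β hβ0) hδ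
    obtain ⟨Qc, hQc, hfeas, rfl⟩ := ha
    have hlt' : max (R - entC (margY Q) Qc) 0 < Afun P Q R β + δ := hlt
    have hAnn := afun_nonneg P Q R β
    by_cases hH : R ≤ entC (margY Q) Qc
    · by_cases hQ0 : R ≤ entC (margY Q) (condOf Q)
      · -- case B : use Q with its own conditional
        have hm : AfunInf P Q R ≤ 0 := by
          have h := afunInf_le P Q R (condOf Q) (condOf_isCond Q hQ.1)
            (le_of_eq (epsC_condOf P Q hQ.1).symm)
          rwa [max_eq_right (sub_nonpos.mpr hQ0)] at h
        have h2 := efunInf_le P hpos hsum R Q hQ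
        linarith
      · -- case B' : use the product Q' = margY Q ⊗ Qc
        push_neg at hQ0
        set Q' : X → Y → ℝ := fun x y => margY Q y * Qc y x with hQ'def
        have hQ' : IsJointPMF Q' := isJoint_prod Q hQ Qc hQc
        have hmarg : margY Q' = margY Q := margY_prod Q Qc hQc
        have hAf : AfunInf P Q' R ≤ 0 := by
          have hfe : epsJ P Q' ≤ epsC P (margY Q') Qc := by
            rw [hmarg]
            exact le_of_eq (epsJ_prod P Q Qc)
          have h := afunInf_le P Q' R Qc hQc hfe
          rwa [hmarg, max_eq_right (sub_nonpos.mpr hH)] at h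
        have hKL : KLdiv Q' P ≤ KLdiv Q P := by
          rw [hQ'def, kl_prod P Q hpos hQ Qc hQc, kl_eq P Q hpos hQ]
          have hfe : epsJ P Q ≤ epsC P (margY Q) Qc
              + (1 / β) * (entC (margY Q) Qc - R) := by
            rwa [max_eq_left (by linarith)] at hfeas
          have h1b : (1 / β) * (entC (margY Q) Qc - R) ≤ entC (margY Q) Qc - R := by
            have h1 : 1 / β ≤ 1 := by
              rw [div_le_one hβ0]; exact hβ
            nlinarith [sub_nonneg.mpr hH]
          linarith
        have h2 := efunInf_le P hpos hsum R Q' hQ'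
        linarith
    · -- case A : H < R, Qc is feasible for the ∞ problem
      push_neg at hH
      have hfe : epsJ P Q ≤ epsC P (margY Q) Qc := by
        rwa [max_eq_right (by linarith), mul_zero, add_zero] at hfeas
      have hAf := afunInf_le P Q R Qc hQc hfe
      have h2 := efunInf_le P hpos hsum R Q hQ
      linarith
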